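/- arXiv:math-ph/0501074 — 2 statements merged into one kernel-verified Lean document; each statement's English description precedes it below -/
import Mathlib

section
/- Let q : ℝ → ℝ be twice differentiable and satisfy the Painlevé II equation q''(s) = s q(s) + 2 q(s)³, and set r = q'. For (ζ, s) ∈ ℝ² define the 2×2 real matrices A(ζ, s) = [[4ζq(s), 4ζ² + s + 2q(s)² + 2r(s)], [−4ζ² − s − 2q(s)² + 2r(s), −4ζq(s)]] and B(ζ, s) = [[q(s), ζ], [−ζ, −q(s)]]. Then the zero-curvature (compatibility) equation holds identically: ∂_s A(ζ, s) − ∂_ζ B(ζ, s) + A(ζ, s) B(ζ, s) − B(ζ, s) A(ζ, s) = 0 for all ζ, s ∈ ℝ. -/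
noncomputable section

/-- The Flaschka–Newell matrix `A(ζ,s)` built from `q` and `r`. -/
def Amat (q r : ℝ → ℝ) (ζ s : ℝ) : Matrix (Fin 2) (Fin 2) ℝ :=
  !![4 * ζ * q s, 4 * ζ ^ 2 + s + 2 * (q s) ^ 2 + 2 * r s;
     -(4 * ζ ^ 2) - s - 2 * (q s) ^ 2 + 2 * r s, -(4 * ζ * q s)]

/-- The Flaschka–Newell matrix `B(ζ,s)` built from `q`. -/
def Bmat (q : ℝ → ℝ) (ζ s : ℝ) : Matrix (Fin 2) (Fin 2) ℝ :=
  !![q s, ζ; -ζ, -(q s)]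

/-! For arbitrary differentiable `q`, `r`, entrywise `∂_s A − ∂_ζ B + (A B − B A)` equals
`!![4ζ(q' − r), 2(r' − sq − 2q³); 2(r' − sq − 2q³), −4ζ(q' − r)]`: the diagonal vanishes
because `r = q'`, the off-diagonal because of Painlevé II. -/

theorem hasDerivAt_Amat_apply {q r : ℝ → ℝ} {q' r' s : ℝ} (hq : HasDerivAt q q' s)
    (hr : HasDerivAt r r' s) (ζ : ℝ) (i j : Fin 2) :
    HasDerivAt (fun s' => Amat q r ζ s' i j)
      (!![4 * ζ * q', 1 + 4 * q s * q' + 2 * r';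
          -1 - 4 * q s * q' + 2 * r', -(4 * ζ * q')] i j) s := by
  have hq2 : HasDerivAt (fun s' => q s' ^ 2) (2 * q s * q') s := by
    simpa using hq.fun_pow 2
  fin_cases i <;> fin_cases j <;>
    simp only [Amat, Fin.zero_eta, Fin.mk_one, Fin.isValue, Matrix.of_apply, Matrix.cons_val',
      Matrix.cons_val_zero, Matrix.cons_val_one, Matrix.cons_val_fin_one]
  · exact hq.const_mul (4 * ζ)
  · exact ((((hasDerivAt_id s).const_add (4 * ζ ^ 2)).fun_add (hq2.const_mul 2)).fun_add
      (hr.const_mul 2)).congr_deriv (by ring)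
  · exact ((((hasDerivAt_id s).const_sub (-(4 * ζ ^ 2))).fun_sub (hq2.const_mul 2)).fun_add
      (hr.const_mul 2)).congr_deriv (by ring)
  · exact (hq.const_mul (4 * ζ)).fun_neg

theorem hasDerivAt_Bmat_apply (q : ℝ → ℝ) (ζ s : ℝ) (i j : Fin 2) :
    HasDerivAt (fun ζ' => Bmat q ζ' s i j) (!![0, 1; -1, 0] i j) ζ := by
  fin_cases i <;> fin_cases j <;>
    simp only [Bmat, Fin.zero_eta, Fin.mk_one, Fin.isValue, Matrix.of_apply, Matrix.cons_val',
      Matrix.cons_val_zero, Matrix.cons_val_one, Matrix.cons_val_fin_one]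
  · exact hasDerivAt_const ζ (q s)
  · exact hasDerivAt_id' ζ
  · exact (hasDerivAt_id' ζ).fun_neg
  · exact hasDerivAt_const ζ (-q s)

theorem Amat_mul_Bmat_sub_Bmat_mul_Amat (q r : ℝ → ℝ) (ζ s : ℝ) :
    Amat q r ζ s * Bmat q ζ s - Bmat q ζ s * Amat q r ζ s =
      !![-(4 * ζ * r s), -(2 * s * q s + 4 * q s ^ 3 + 4 * q s * r s);
         -(2 * s * q s + 4 * q s ^ 3) + 4 * q s * r s, 4 * ζ * r s] := by
  ext i j
  fin_cases i <;> fin_cases j <;> simp [Amat, Bmat] <;> ring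

/-- If `q` solves Painlevé II, `q'' = s q + 2 q³`, and `r = q'`, then the
zero-curvature equation `∂_s A − ∂_ζ B + A B − B A = 0` holds identically (entrywise). -/
theorem zero_curvature
    (q r : ℝ → ℝ)
    (hq : ∀ s : ℝ, HasDerivAt q (r s) s)
    (hr : ∀ s : ℝ, HasDerivAt r (s * q s + 2 * q s ^ 3) s) :
    ∀ (ζ s : ℝ) (i j : Fin 2),
      deriv (fun s' => Amat q r ζ s' i j) s - deriv (fun ζ' => Bmat q ζ' s i j) ζ
          + (Amat q r ζ s * Bmat q ζ s - Bmat q ζ s * Amat q r ζ s) i j = 0 := by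
  intro ζ s i j
  rw [(hasDerivAt_Amat_apply (hq s) (hr s) ζ i j).deriv, (hasDerivAt_Bmat_apply q ζ s i j).deriv,
    Amat_mul_Bmat_sub_Bmat_mul_Amat]
  fin_cases i <;> fin_cases j <;> simp <;> ring

end
end

section
/- Let a < b be real numbers and let ψ : ℝ → ℝ be a bounded measurable function vanishing outside [a, b]. Define g(z) = ∫_a^b Log(z − s) ψ(s) ds for z ∈ ℂ \ ℝ, where Log is the principal branch of the logarithm. Then for every x ∈ ℝ, lim_{ε→0+} ( g(x + iε) − g(x − iε) ) = 2πi ∫_x^b ψ(s) ds (with the convention that the integral is 0 when x ≥ b and equals ∫_a^b ψ when x ≤ a). -/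
/-!
For real `w ≠ 0` the points `w ± iε` approach `w` from opposite sides of the real axis, so
`Log (w + iε) - Log (w - iε)` tends to `0` when `w > 0` and to `2πi` when `w < 0`, where they sit
on opposite sides of the branch cut. Being `2i arg (w + iε)`, this difference is bounded by `2π`.
Dominated convergence in `s`, with `w = x - s`, gives the limit `2πi ∫_a^b 1_{s > x} ψ(s) ds`,
which is `2πi ∫_x^b ψ` because `ψ` vanishes outside `[a, b]`.
-/

open Filter Topology intervalIntegral

open Complex MeasureTheory Set
open scoped ComplexConjugate Real

theorem intervalIntegral_indicator_Ioi_of_support_subset {E : Type*}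
    [NormedAddCommGroup E] [NormedSpace ℝ E] {a b : ℝ} {f : ℝ → E}
    (hf : Function.support f ⊆ Icc a b) (x : ℝ) :
    ∫ s in a..b, (Ioi x).indicator f s = ∫ s in x..b, f s := by
  have hf' : ∀ s ∉ Icc a b, f s = 0 := Function.support_subset_iff'.1 hf
  have hIoi : ∀ c, ∫ s in Ioc b c, f s = 0 := fun c =>
    setIntegral_eq_zero_of_forall_eq_zero fun s hs => hf' s fun h => (h.2.trans_lt hs.1).false
  have hIoc : ∫ s in Ioc b a, (Ioi x).indicator f s = 0 :=
    setIntegral_eq_zero_of_forall_eq_zero fun s hs =>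
      indicator_apply_eq_zero.2 fun _ => hf' s fun h => (h.2.trans_lt hs.1).false
  have hdiff : ∀ᵐ s, s ∈ Ioc x b \ Ioc (a ⊔ x) b → f s = 0 := by
    filter_upwards [Real.volume_singleton (a := a) |> measure_eq_zero_iff_ae_notMem.1]
      with s hsa hs
    obtain ⟨⟨hxs, hsb⟩, hs'⟩ := hs
    have hsa' : s ≤ a := not_lt.1 fun h => hs' ⟨sup_lt_iff.2 ⟨h, hxs⟩, hsb⟩
    exact hf' s fun h => hsa (le_antisymm hsa' h.1)
  rw [intervalIntegral, intervalIntegral, hIoi, hIoc, sub_zero, sub_zero,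
    setIntegral_indicator measurableSet_Ioi, Ioc_inter_Ioi,
    setIntegral_eq_of_subset_of_ae_sdiff_eq_zero measurableSet_Ioc.nullMeasurableSet
      (Ioc_subset_Ioc_left le_sup_right) hdiff]

namespace Complex

theorem norm_log_sub_log_conj_le (z : ℂ) : ‖log z - log (conj z)‖ ≤ 2 * π := by
  by_cases h : z.arg = π
  · rw [conj_eq_iff_im.2 (arg_eq_pi_iff.1 h).2, sub_self, norm_zero]
    positivity
  · rw [log_conj z h, sub_conj, log_im, norm_mul, norm_I, mul_one, norm_real, Real.norm_eq_abs,
      abs_mul, abs_two]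
    linarith [abs_arg_le_pi z]

theorem continuous_log_sub_ofReal {z : ℂ} (hz : z.im ≠ 0) :
    Continuous fun s : ℝ => log (z - s) :=
  continuous_iff_continuousAt.2 fun s =>
    (continuousAt_clog (mem_slitPlane_iff.2 (Or.inr (by simpa using hz)))).comp (by fun_prop)

theorem tendsto_log_add_sub_log_sub_of_mem_slitPlane {w : ℂ} (hw : w ∈ slitPlane) :
    Tendsto (fun ε : ℝ => log (w + ε * I) - log (w - ε * I)) (𝓝 0) (𝓝 0) := by
  have hlog : ContinuousAt (fun ε : ℝ => log (w + ε * I) - log (w - ε * I)) 0 :=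
    ((continuousAt_clog (by simpa using hw)).comp (by fun_prop)).sub
      ((continuousAt_clog (by simpa using hw)).comp (by fun_prop))
  simpa using hlog.tendsto

theorem tendsto_log_add_sub_log_sub_of_re_neg {w : ℂ} (hre : w.re < 0) (him : w.im = 0) :
    Tendsto (fun ε : ℝ => log (w + ε * I) - log (w - ε * I)) (𝓝[>] 0)
      (𝓝 (2 * π * I)) := by
  have hw : ∀ c : ℂ, Tendsto (fun ε : ℝ => w + ε * c) (𝓝[>] 0) (𝓝 w) := fun c =>
    ((Continuous.tendsto' (by fun_prop) 0 w (by simp))).mono_left nhdsWithin_le_nhds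
  have hupper : Tendsto (fun ε : ℝ => w + ε * I) (𝓝[>] 0) (𝓝[{z : ℂ | 0 ≤ z.im}] w) :=
    tendsto_nhdsWithin_iff.2 ⟨hw I, eventually_mem_nhdsWithin.mono fun ε (hε : 0 < ε) => by
      simpa [him] using hε.le⟩
  have hlower : Tendsto (fun ε : ℝ => w - ε * I) (𝓝[>] 0) (𝓝[{z : ℂ | z.im < 0}] w) :=
    tendsto_nhdsWithin_iff.2 ⟨by simpa [sub_eq_add_neg] using hw (-I),
      eventually_mem_nhdsWithin.mono fun ε (hε : 0 < ε) => by simpa [him] using hε⟩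
  have h := ((tendsto_log_nhdsWithin_im_nonneg_of_re_neg_of_im_zero hre him).comp hupper).sub
    ((tendsto_log_nhdsWithin_im_neg_of_re_neg_of_im_zero hre him).comp hlower)
  rwa [show Real.log ‖w‖ + π * I - (Real.log ‖w‖ - π * I) = 2 * π * I by ring] at h

theorem tendsto_log_add_sub_log_sub_ofReal {x s : ℝ} (hsx : s ≠ x) :
    Tendsto (fun ε : ℝ => log ((x : ℂ) + ε * I - s) - log ((x : ℂ) - ε * I - s))
      (𝓝[>] 0) (𝓝 ((Ioi x).indicator (fun _ => 2 * π * I) s)) := by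
  have hplus : ∀ ε : ℝ, (x : ℂ) + ε * I - s = ((x - s : ℝ) : ℂ) + ε * I := by
    intro ε; push_cast; ring
  have hminus : ∀ ε : ℝ, (x : ℂ) - ε * I - s = ((x - s : ℝ) : ℂ) - ε * I := by
    intro ε; push_cast; ring
  simp only [hplus, hminus]
  rcases lt_or_gt_of_ne hsx with hs | hs
  · rw [indicator_of_notMem (show s ∉ Ioi x from not_lt.2 hs.le)]
    exact (tendsto_log_add_sub_log_sub_of_mem_slitPlane
      (ofReal_mem_slitPlane.2 (sub_pos.2 hs))).mono_left nhdsWithin_le_nhds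
  · rw [indicator_of_mem (mem_Ioi.2 hs)]
    exact tendsto_log_add_sub_log_sub_of_re_neg (by simpa using hs) (ofReal_im _)

theorem tendsto_intervalIntegral_log_sub_log {a b : ℝ} {ψ : ℝ → ℂ}
    (hψ : IntervalIntegrable ψ volume a b) (x : ℝ) :
    Tendsto (fun ε : ℝ => (∫ s in a..b, log ((x : ℂ) + ε * I - s) * ψ s) -
        ∫ s in a..b, log ((x : ℂ) - ε * I - s) * ψ s)
      (𝓝[>] 0) (𝓝 (2 * π * I * ∫ s in a..b, (Ioi x).indicator ψ s)) := by
  have hint : ∀ {z : ℂ}, z.im ≠ 0 →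
      IntervalIntegrable (fun s : ℝ => log (z - s) * ψ s) volume a b :=
    fun hz => hψ.continuousOn_mul (continuous_log_sub_ofReal hz).continuousOn
  have hsplit : ∀ᶠ ε : ℝ in 𝓝[>] 0,
      ∫ s in a..b, (log ((x : ℂ) + ε * I - s) - log ((x : ℂ) - ε * I - s)) * ψ s =
        (∫ s in a..b, log ((x : ℂ) + ε * I - s) * ψ s) -
          ∫ s in a..b, log ((x : ℂ) - ε * I - s) * ψ s :=
    eventually_mem_nhdsWithin.mono fun ε (hε : 0 < ε) => by
      simp_rw [sub_mul]
      exact integral_sub (hint (by simpa using hε.ne')) (hint (by simpa using hε.ne'))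
  rw [← intervalIntegral.integral_const_mul]
  refine (tendsto_integral_filter_of_dominated_convergence (fun s => 2 * π * ‖ψ s‖) ?_ ?_
    (hψ.norm.const_mul _) ?_).congr' hsplit
  · exact eventually_mem_nhdsWithin.mono fun ε (hε : 0 < ε) =>
      ((hint (by simpa using hε.ne')).sub (hint (by simpa using hε.ne'))).def'
        |>.aestronglyMeasurable.congr (ae_of_all _ fun s => (sub_mul _ _ _).symm)
  · refine eventually_mem_nhdsWithin.mono fun ε _ => ae_of_all _ fun s _ => ?_
    have hconj : conj ((x : ℂ) + ε * I - s) = (x : ℂ) - ε * I - s := by simp [sub_eq_add_neg]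
    rw [norm_mul, ← hconj]
    exact mul_le_mul_of_nonneg_right (norm_log_sub_log_conj_le _) (norm_nonneg _)
  · filter_upwards [Real.volume_singleton (a := x) |> measure_eq_zero_iff_ae_notMem.1]
      with s hsx _
    have hlim : 2 * π * I * (Ioi x).indicator ψ s =
        (Ioi x).indicator (fun _ => 2 * π * I) s * ψ s := by
      by_cases hs : s ∈ Ioi x <;> simp [hs]
    rw [hlim]
    exact (tendsto_log_add_sub_log_sub_ofReal hsx).mul_const (ψ s)

end Complex

theorem gfunction_jump_general
    (a b : ℝ) (ψ : ℝ → ℝ)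
    (hmeas : Measurable ψ) (hbdd : ∃ M : ℝ, ∀ x, |ψ x| ≤ M)
    (hsupp : ∀ x : ℝ, x ∉ Set.Icc a b → ψ x = 0) :
    ∀ x : ℝ,
      Tendsto (fun ε : ℝ =>
          (∫ s in a..b, Complex.log (((x : ℂ) + ε * Complex.I) - (s : ℂ)) * (ψ s : ℂ)) -
          ∫ s in a..b, Complex.log (((x : ℂ) - ε * Complex.I) - (s : ℂ)) * (ψ s : ℂ))
        (𝓝[>] 0)
        (𝓝 (2 * Real.pi * Complex.I * ((∫ s in x..b, ψ s : ℝ) : ℂ))) := by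
  intro x
  obtain ⟨M, hM⟩ := hbdd
  have hψ : IntervalIntegrable (fun s => (ψ s : ℂ)) volume a b :=
    intervalIntegrable_const.mono_fun' (by fun_prop) (ae_of_all _ fun s => by simpa using hM s)
  have hsupp' : Function.support (fun s => (ψ s : ℂ)) ⊆ Icc a b :=
    Function.support_subset_iff'.2 fun s hs => by simp [hsupp s hs]
  have h := tendsto_intervalIntegral_log_sub_log hψ x
  rwa [intervalIntegral_indicator_Ioi_of_support_subset hsupp',
    intervalIntegral.integral_ofReal] at h

/-- For `ψ` bounded measurable vanishing outside `[a,b]` and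
`g(z) = ∫_a^b Log(z − s) ψ(s) ds` (principal branch), the jump of `g` across the real
axis is `g₊(x) − g₋(x) = 2πi ∫_x^b ψ(s) ds` for every `x ∈ ℝ`. -/
theorem gfunction_jump
    (a b : ℝ) (hab : a < b) (ψ : ℝ → ℝ)
    (hmeas : Measurable ψ) (hbdd : ∃ M : ℝ, ∀ x, |ψ x| ≤ M)
    (hsupp : ∀ x : ℝ, x ∉ Set.Icc a b → ψ x = 0) :
    ∀ x : ℝ,
      Tendsto (fun ε : ℝ =>
          (∫ s in a..b, Complex.log (((x : ℂ) + ε * Complex.I) - (s : ℂ)) * (ψ s : ℂ)) -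
          ∫ s in a..b, Complex.log (((x : ℂ) - ε * Complex.I) - (s : ℂ)) * (ψ s : ℂ))
        (𝓝[>] 0)
        (𝓝 (2 * Real.pi * Complex.I * ((∫ s in x..b, ψ s : ℝ) : ℂ))) :=
  gfunction_jump_general a b ψ hmeas hbdd hsupp
end
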